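/- arXiv:1803.05671 — 2 statements merged into one kernel-verified Lean document; each statement's English description precedes it below -/
import Mathlib

section
/- Let S : ℝ₊^N → ℝ₊^N be continuous, monotone, and positively homogeneous (S(tx) = tS(x) for all t > 0), let ε > 0, set T_ε(x) = S(x) + ε·1, and let ‖·‖ be a monotone norm on ℝ^N. Let (p_n) ⊂ (0,∞) with p_n → ∞, and for each n let x_{p_n} ∈ ℝ₊₊^N satisfy T_ε(x_{p_n}) = (‖T_ε(x_{p_n})‖/p_n)·x_{p_n} and ‖x_{p_n}‖ = p_n. Then every accumulation point u of the normalized sequence (x_{p_n}/p_n) satisfies ‖u‖ = 1 and S(u) = ρ(S)·u; i.e., u is an eigenvector of S associated with the eigenvalue ρ(S). -/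
/-!
Dividing the defining equation by `p_n` shows that `y_n = x_{p_n} / p_n` satisfies
`c_n y_n = S(y_n) + (ε / p_n) 1` with `‖y_n‖ = 1` and `c_n = ‖T_ε(x_{p_n})‖ / p_n = ‖c_n y_n‖`.
Along a subsequence `y_n → u`, so `c_n → ‖S u‖` and `S u = ‖S u‖ u`. On the other hand
`S(x_{p_n}) ≤ c_n x_{p_n}` with `x_{p_n}` strictly positive: scaling any nonnegative eigenvector
of `S` until it touches `x_{p_n}` from below and comparing at a touching coordinate bounds its
eigenvalue by `c_n`. Hence `‖S u‖` is the largest eigenvalue of `S` on the cone, i.e. `ρ(S)`.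
-/

open Filter Topology

theorem Seminorm.continuous_of_finiteDimensional {E : Type*} [NormedAddCommGroup E]
    [NormedSpace ℝ E] [FiniteDimensional ℝ E] (q : Seminorm ℝ E) : Continuous q :=
  continuousOn_univ.mp (q.convexOn.continuousOn isOpen_univ)

theorem Seminorm.tendsto_of_tendsto_smul {α E : Type*} [AddCommGroup E] [Module ℝ E]
    [TopologicalSpace E] {l : Filter α} (q : Seminorm ℝ E) (hq : Continuous q)
    {y : α → E} {c : α → ℝ} {v : E} (hc : ∀ a, 0 ≤ c a) (hy : ∀ a, q (y a) = 1)
    (hcy : Tendsto (fun a => c a • y a) l (𝓝 v)) : Tendsto c l (𝓝 (q v)) :=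
  ((hq.tendsto v).comp hcy).congr fun a => by
    simp [map_smul_eq_mul, hy, abs_of_nonneg (hc a)]

theorem exists_pos_smul_le_of_pos {ι : Type*} [Fintype ι] {x w : ι → ℝ} (hx : ∀ i, 0 < x i)
    (hw : 0 ≤ w) (hw0 : w ≠ 0) : ∃ t > 0, ∃ j, 0 < w j ∧ t • w ≤ x ∧ t * w j = x j := by
  classical
  have hne : (Finset.univ.filter fun i => 0 < w i).Nonempty := by
    obtain ⟨i, hi⟩ := Function.ne_iff.mp hw0
    exact ⟨i, by simpa using (hw i).lt_of_ne' hi⟩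
  obtain ⟨j, hj, hmin⟩ := Finset.exists_min_image _ (fun i => x i / w i) hne
  have hwj : 0 < w j := (Finset.mem_filter.mp hj).2
  refine ⟨x j / w j, div_pos (hx j) hwj, j, hwj, fun i => ?_, div_mul_cancel₀ _ hwj.ne'⟩
  rcases (hw i).lt_or_eq with hwi | hwi
  · exact (le_div_iff₀ hwi).mp (hmin i (by simpa using hwi))
  · simp [← hwi, (hx i).le]

theorem eigenvalue_le_of_map_le_smul {ι : Type*} [Fintype ι] {S : (ι → ℝ) → ι → ℝ}
    (hS_mono : ∀ x y : ι → ℝ, 0 ≤ x → 0 ≤ y → x ≤ y → S x ≤ S y)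
    (hS_hom : ∀ t : ℝ, 0 < t → ∀ x : ι → ℝ, 0 ≤ x → S (t • x) = t • S x)
    {x w : ι → ℝ} {c μ : ℝ} (hx : ∀ i, 0 < x i) (hSx : S x ≤ c • x)
    (hw : 0 ≤ w) (hw0 : w ≠ 0) (hSw : S w = μ • w) : μ ≤ c := by
  obtain ⟨t, ht, j, hwj, htw, htj⟩ := exists_pos_smul_le_of_pos hx hw hw0
  have key : (t * μ) • w ≤ c • x := calc
    (t * μ) • w = S (t • w) := by rw [hS_hom t ht w hw, hSw, smul_smul]
    _ ≤ S x := hS_mono _ _ (smul_nonneg ht.le hw) (fun i => (hx i).le) htw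
    _ ≤ c • x := hSx
  have hj : μ * (t * w j) ≤ c * (t * w j) := by
    simpa only [Pi.smul_apply, smul_eq_mul, ← htj, mul_comm t μ, mul_assoc] using key j
  exact le_of_mul_le_mul_right hj (mul_pos ht hwj)

theorem tendsto_and_map_eq_smul_of_approx_eigen {α ι : Type*} [Fintype ι] {l : Filter α}
    [l.NeBot] {S : (ι → ℝ) → ι → ℝ} (hS : ContinuousOn S (Set.Ici 0)) (q : Seminorm ℝ (ι → ℝ))
    {y δ : α → ι → ℝ} {c : α → ℝ} {u : ι → ℝ} (hy : ∀ a, 0 ≤ y a) (hqy : ∀ a, q (y a) = 1)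
    (hc : ∀ a, 0 ≤ c a) (hcy : ∀ a, c a • y a = S (y a) + δ a) (hδ : Tendsto δ l (𝓝 0))
    (hyu : Tendsto y l (𝓝 u)) : Tendsto c l (𝓝 (q (S u))) ∧ S u = q (S u) • u := by
  have hu : 0 ≤ u := ge_of_tendsto' hyu hy
  have hSy : Tendsto (fun a => S (y a)) l (𝓝 (S u)) :=
    (hS u hu).tendsto.comp (tendsto_nhdsWithin_iff.2 ⟨hyu, Eventually.of_forall hy⟩)
  have hcyu : Tendsto (fun a => c a • y a) l (𝓝 (S u)) := by
    simpa only [hcy, add_zero] using hSy.add hδ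
  have hcq := q.tendsto_of_tendsto_smul q.continuous_of_finiteDimensional hc hqy hcyu
  exact ⟨hcq, tendsto_nhds_unique hcyu (hcq.smul hyu)⟩

theorem csSup_eigenvalues_eq_of_tendsto {α ι : Type*} [Fintype ι] {l : Filter α} [l.NeBot]
    {S : (ι → ℝ) → ι → ℝ} (hS_mono : ∀ x y : ι → ℝ, 0 ≤ x → 0 ≤ y → x ≤ y → S x ≤ S y)
    (hS_hom : ∀ t : ℝ, 0 < t → ∀ x : ι → ℝ, 0 ≤ x → S (t • x) = t • S x)
    {x : α → ι → ℝ} {c : α → ℝ} {L : ℝ} {u : ι → ℝ} (hx : ∀ a i, 0 < x a i)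
    (hSx : ∀ a, S (x a) ≤ c a • x a) (hc : Tendsto c l (𝓝 L)) (hL : 0 ≤ L) (hu : 0 ≤ u)
    (hu0 : u ≠ 0) (hSu : S u = L • u) :
    sSup {lam : ℝ | 0 ≤ lam ∧ ∃ w : ι → ℝ, (∀ i, 0 ≤ w i) ∧ w ≠ 0 ∧ S w = lam • w} = L := by
  refine IsGreatest.csSup_eq ⟨⟨hL, u, hu, hu0, hSu⟩, ?_⟩
  rintro μ ⟨-, w, hw, hw0, hSw⟩
  exact ge_of_tendsto' hc fun a =>
    eigenvalue_le_of_map_le_smul hS_mono hS_hom (hx a) (hSx a) hw hw0 hSw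

theorem stmt_5_general (N : ℕ)
    (S : (Fin N → ℝ) → (Fin N → ℝ))
    (hS_cont : ContinuousOn S {x : Fin N → ℝ | ∀ i, 0 ≤ x i})
    (hS_mono : ∀ x y : Fin N → ℝ, (∀ i, 0 ≤ x i) → (∀ i, 0 ≤ y i) → x ≤ y → S x ≤ S y)
    (hS_hom : ∀ t : ℝ, 0 < t → ∀ x : Fin N → ℝ, (∀ i, 0 ≤ x i) → S (t • x) = t • S x)
    (ε : ℝ) (hε : 0 < ε)
    (Tε : (Fin N → ℝ) → (Fin N → ℝ))
    (hTε : ∀ x, Tε x = S x + ε • (1 : Fin N → ℝ))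
    (nrm : (Fin N → ℝ) → ℝ)
    (hnrm_smul : ∀ (a : ℝ) (x : Fin N → ℝ), nrm (a • x) = |a| * nrm x)
    (hnrm_add : ∀ x y : Fin N → ℝ, nrm (x + y) ≤ nrm x + nrm y)
    (p : ℕ → ℝ) (hp_pos : ∀ n, 0 < p n) (hp_lim : Tendsto p atTop atTop)
    (X : ℕ → (Fin N → ℝ))
    (hX : ∀ n : ℕ,
      (∀ i, 0 < X n i) ∧ Tε (X n) = (nrm (Tε (X n)) / p n) • X n ∧ nrm (X n) = p n)
    (u : Fin N → ℝ)
    (hu : MapClusterPt u atTop (fun n : ℕ => (p n)⁻¹ • X n)) :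
    nrm u = 1 ∧
    S u = (sSup {lam : ℝ | 0 ≤ lam ∧
      ∃ w : Fin N → ℝ, (∀ i, 0 ≤ w i) ∧ w ≠ 0 ∧ S w = lam • w}) • u := by
  let q : Seminorm ℝ (Fin N → ℝ) := Seminorm.of nrm hnrm_add hnrm_smul
  obtain ⟨φ, hφ, hYu⟩ := hu.tendsto_subseq
  set Y : ℕ → Fin N → ℝ := fun n => (p n)⁻¹ • X n
  set c : ℕ → ℝ := fun n => nrm (Tε (X n)) / p n
  have hY : ∀ n, 0 ≤ Y n := fun n =>
    smul_nonneg (inv_nonneg.2 (hp_pos n).le) fun i => ((hX n).1 i).le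
  have hqY : ∀ n, q (Y n) = 1 := fun n => by
    change nrm ((p n)⁻¹ • X n) = 1
    rw [hnrm_smul, (hX n).2.2, abs_of_pos (inv_pos.2 (hp_pos n)), inv_mul_cancel₀ (hp_pos n).ne']
  have hcY : ∀ n, c n • Y n = S (Y n) + (p n)⁻¹ • ε • (1 : Fin N → ℝ) := fun n => by
    rw [smul_comm, ← (hX n).2.1, hTε, hS_hom _ (inv_pos.2 (hp_pos n)) _ fun i => ((hX n).1 i).le,
      smul_add]
  have hSX : ∀ n, S (X n) ≤ c n • X n := fun n => by
    rw [← (hX n).2.1, hTε]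
    exact le_add_of_nonneg_right (smul_nonneg hε.le zero_le_one)
  have hδ : Tendsto (fun k => (p (φ k))⁻¹ • ε • (1 : Fin N → ℝ)) atTop (𝓝 0) := by
    simpa using (hp_lim.comp hφ.tendsto_atTop).inv_tendsto_atTop.smul_const (ε • (1 : Fin N → ℝ))
  obtain ⟨hc, hSu⟩ := tendsto_and_map_eq_smul_of_approx_eigen hS_cont q (fun k => hY (φ k))
    (fun k => hqY (φ k)) (fun k => div_nonneg (apply_nonneg q _) (hp_pos _).le) (fun k => hcY (φ k))
    hδ hYu
  have hqu : q u = 1 :=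
    tendsto_nhds_unique ((q.continuous_of_finiteDimensional.tendsto u).comp hYu)
      (by simp [Function.comp_def, hqY])
  refine ⟨hqu, ?_⟩
  rw [csSup_eigenvalues_eq_of_tendsto hS_mono hS_hom (fun k => (hX (φ k)).1) (fun k => hSX (φ k)) hc
    (apply_nonneg q _) (ge_of_tendsto' hYu fun k => hY (φ k)) (fun h => by simp [h] at hqu) hSu]
  exact hSu

/-- For `T_ε(x) = S(x) + ε·1`, a sequence `p_n → ∞` and normalized conditional
eigenvectors `X n ∈ ℝ₊₊^N` with `T_ε(X n) = (‖T_ε(X n)‖/p_n)·(X n)` and `‖X n‖ = p_n`,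
every accumulation point `u` of the normalized sequence `(X n / p_n)` satisfies
`‖u‖ = 1` and `S(u) = ρ(S)·u`. -/
theorem stmt_5 (N : ℕ) (hN : 1 ≤ N)
    (S : (Fin N → ℝ) → (Fin N → ℝ))
    (hS_nonneg : ∀ x : Fin N → ℝ, (∀ i, 0 ≤ x i) → ∀ i, 0 ≤ S x i)
    (hS_cont : ContinuousOn S {x : Fin N → ℝ | ∀ i, 0 ≤ x i})
    (hS_mono : ∀ x y : Fin N → ℝ, (∀ i, 0 ≤ x i) → (∀ i, 0 ≤ y i) → x ≤ y → S x ≤ S y)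
    (hS_hom : ∀ t : ℝ, 0 < t → ∀ x : Fin N → ℝ, (∀ i, 0 ≤ x i) → S (t • x) = t • S x)
    (ε : ℝ) (hε : 0 < ε)
    (Tε : (Fin N → ℝ) → (Fin N → ℝ))
    (hTε : ∀ x, Tε x = S x + ε • (1 : Fin N → ℝ))
    (nrm : (Fin N → ℝ) → ℝ)
    (hnrm_zero : ∀ x, nrm x = 0 ↔ x = 0)
    (hnrm_smul : ∀ (a : ℝ) (x : Fin N → ℝ), nrm (a • x) = |a| * nrm x)
    (hnrm_add : ∀ x y : Fin N → ℝ, nrm (x + y) ≤ nrm x + nrm y)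
    (hnrm_mono : ∀ x y : Fin N → ℝ, (0 : Fin N → ℝ) ≤ x → x ≤ y → nrm x ≤ nrm y)
    (p : ℕ → ℝ) (hp_pos : ∀ n, 0 < p n) (hp_lim : Tendsto p atTop atTop)
    (X : ℕ → (Fin N → ℝ))
    (hX : ∀ n : ℕ,
      (∀ i, 0 < X n i) ∧ Tε (X n) = (nrm (Tε (X n)) / p n) • X n ∧ nrm (X n) = p n)
    (u : Fin N → ℝ)
    (hu : MapClusterPt u atTop (fun n : ℕ => (p n)⁻¹ • X n)) :
    nrm u = 1 ∧
    S u = (sSup {lam : ℝ | 0 ≤ lam ∧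
      ∃ w : Fin N → ℝ, (∀ i, 0 ≤ w i) ∧ w ≠ 0 ∧ S w = lam • w}) • u :=
  stmt_5_general N S hS_cont hS_mono hS_hom ε hε Tε hTε nrm hnrm_smul hnrm_add p hp_pos hp_lim X hX
    u hu
end

section
/- Let T : ℝ₊^N → ℝ₊₊^N be continuous and concave (each coordinate function concave on ℝ₊^N), and let x* ∈ ℝ₊^N satisfy T(x*) = x*. For each d ∈ ℝ₊^N the function t ↦ T(td)/t is coordinatewise nonincreasing on (0,∞), so the asymptotic mapping S(d) := lim_{t→∞} T(td)/t exists in ℝ₊^N. Suppose v ∈ ℝ₊^N \ {0} and ρ ∈ [0,1) satisfy S(v) = ρv, and let ‖·‖ be a monotone norm on ℝ^N. If x₁ ∈ ℝ₊^N satisfies x₁ ≤ x* − εv or x₁ ≥ x* + εv for some ε > 0, then for every n ≥ 1, the estimation error of the fixed point iteration satisfies ρ^n ε ‖v‖ ≤ ‖T^n(x₁) − x*‖. -/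
/-!
A concave function on a ray that is bounded below is nondecreasing: a secant of negative slope
would drive it to `-∞`. On segments of the orthant this makes `T` monotone. Since `t ↦ T(td)/t`
decreases to `S d`, we have `T(tv) ≥ tρv`, so `t ↦ Tᵢ(x* + tv) - ρvᵢt` is bounded below and hence
nondecreasing; comparing `t = -δ, 0, δ` gives `T(x* - δv) ≤ x* - ρδv` and
`T(x* + δv) ≥ x* + ρδv`. By monotonicity of `T` the `n`-th iterate therefore stays `ερⁿv` below
or above `x*`, and a monotone norm turns this into the bound.
-/

open Filter Topology Set

section OneVariable

variable {𝕜 : Type*} [Field 𝕜] [LinearOrder 𝕜] [IsStrictOrderedRing 𝕜] {f : 𝕜 → 𝕜}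

theorem ConcaveOn.monotoneOn_of_bddBelow {a : 𝕜} (hf : ConcaveOn 𝕜 (Ici a) f)
    (hb : BddBelow (f '' Ici a)) : MonotoneOn f (Ici a) := by
  intro x hx y hy hxy
  by_contra! hlt
  obtain ⟨m, hm⟩ := hb
  have hxy' : x < y := hxy.lt_of_ne (by rintro rfl; exact hlt.false)
  set σ := (f y - f x) / (y - x)
  have hσ : σ < 0 := div_neg_of_neg_of_pos (sub_neg.2 hlt) (sub_pos.2 hxy')
  -- A secant of negative slope pushes `f` below `m` far enough to the right.
  obtain ⟨z, hz_def⟩ : ∃ z, z = y + (f y - m) / -σ + 1 := ⟨_, rfl⟩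
  have hyz : y < z := by
    have : 0 ≤ (f y - m) / -σ :=
      div_nonneg (sub_nonneg.2 (hm ⟨y, hy, rfl⟩)) (neg_nonneg.2 hσ.le)
    linarith
  have hz : z ∈ Ici a := le_trans hy hyz.le
  have hfz : f z ≤ f y + σ * (z - y) := by
    have hslope := hf.slope_anti_adjacent hx hz hxy' hyz
    rw [div_le_iff₀ (sub_pos.2 hyz)] at hslope
    linarith
  have hσz : σ * (z - y) = m - f y + σ := by
    have := hσ.ne
    rw [hz_def]
    field_simp
    ring
  linarith [hm ⟨z, hz, rfl⟩]

theorem ConcaveOn.antitoneOn_inv_mul (hf : ConcaveOn 𝕜 (Ici 0) f) (hf0 : 0 ≤ f 0) :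
    AntitoneOn (fun t => t⁻¹ * f t) (Ioi 0) := by
  intro t (ht : 0 < t) u (hu : 0 < u) htu
  have hθ : 0 ≤ 1 - t / u := sub_nonneg.2 ((div_le_one hu).2 htu)
  have hconc := hf.2 (mem_Ici.2 hu.le) (mem_Ici.2 le_rfl) (div_nonneg ht.le hu.le) hθ (by ring)
  have hcomb : t / u * u + (1 - t / u) * 0 = t := by field_simp; ring
  simp only [smul_eq_mul, hcomb] at hconc
  calc u⁻¹ * f u = t⁻¹ * (t / u * f u) := by field_simp
    _ ≤ t⁻¹ * f t := by gcongr; nlinarith [mul_nonneg hθ hf0]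

end OneVariable

theorem ConcaveOn.comp_add_smul {𝕜 E β : Type*} [Field 𝕜] [LinearOrder 𝕜] [AddCommGroup E]
    [Module 𝕜 E] [AddCommMonoid β] [PartialOrder β] [SMul 𝕜 β] {s : Set E} {f : E → β}
    (hf : ConcaveOn 𝕜 s f) (x v : E) :
    ConcaveOn 𝕜 {t : 𝕜 | x + t • v ∈ s} (fun t => f (x + t • v)) := by
  convert hf.comp_affineMap (AffineMap.lineMap x (x + v)) using 1 <;>
    ext <;> simp [AffineMap.lineMap_apply_module', add_comm]

section OrderedModule

variable {E : Type*} [AddCommGroup E] [PartialOrder E] [Module ℝ E] [PosSMulMono ℝ E]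
  {f : E → ℝ}

theorem ConcaveOn.mul_le_of_tendsto (hf : ConcaveOn ℝ (Ici 0) f) (hf0 : 0 ≤ f 0) {d : E}
    (hd : 0 ≤ d) {L : ℝ} (hL : Tendsto (fun t : ℝ => t⁻¹ * f (t • d)) atTop (𝓝 L)) {t : ℝ}
    (ht : 0 < t) : t * L ≤ f (t • d) := by
  have hray : Ici 0 ⊆ {s : ℝ | 0 + s • d ∈ Ici 0} := fun s (hs : 0 ≤ s) => by
    simpa using smul_nonneg hs hd
  have hanti := ((hf.comp_add_smul 0 d).subset hray (convex_Ici 0)).antitoneOn_inv_mul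
    (by simpa using hf0)
  simp only [zero_add] at hanti
  have hle : L ≤ t⁻¹ * f (t • d) := le_of_tendsto hL <| (eventually_ge_atTop t).mono
    fun u hu => hanti (mem_Ioi.2 ht) (mem_Ioi.2 (ht.trans_le hu)) hu
  calc t * L ≤ t * (t⁻¹ * f (t • d)) := by gcongr
    _ = f (t • d) := by field_simp

variable [IsOrderedAddMonoid E]

theorem ConcaveOn.monotoneOn_of_nonneg (hf : ConcaveOn ℝ (Ici 0) f)
    (hf0 : ∀ x, 0 ≤ x → 0 ≤ f x) : MonotoneOn f (Ici 0) := by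
  intro x (hx : 0 ≤ x) y (hy : 0 ≤ y) hxy
  have hline : Ici 0 ⊆ {t : ℝ | 0 ≤ x + t • (y - x)} := fun t (ht : 0 ≤ t) =>
    add_nonneg hx (smul_nonneg ht (sub_nonneg.2 hxy))
  have hmono := ((hf.comp_add_smul x (y - x)).subset hline (convex_Ici 0)).monotoneOn_of_bddBelow
    ⟨0, by rintro _ ⟨t, ht, rfl⟩; exact hf0 _ (hline ht)⟩
  simpa using hmono (mem_Ici.2 le_rfl) (mem_Ici.2 zero_le_one) zero_le_one

theorem ConcaveOn.monotoneOn_add_smul_sub_mul (hf : ConcaveOn ℝ (Ici 0) f)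
    (hf0 : ∀ x, 0 ≤ x → 0 ≤ f x) {x v : E} {a c : ℝ} (ha : a ≤ 0) (hxa : 0 ≤ x + a • v)
    (hv : 0 ≤ v) (hc : 0 ≤ c) (hcv : ∀ t, 0 < t → t * c ≤ f (t • v)) :
    MonotoneOn (fun t => f (x + t • v) - c * t) (Ici a) := by
  have hline : Ici a ⊆ {t : ℝ | 0 ≤ x + t • v} := fun t (ht : a ≤ t) => by
    have := add_nonneg hxa (smul_nonneg (sub_nonneg.2 ht) hv)
    rwa [add_assoc, ← add_smul, add_sub_cancel] at this
  have hx : 0 ≤ x := by simpa using hline (show a ≤ 0 from ha)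
  have hconc : ConcaveOn ℝ (Ici a) (fun t => f (x + t • v) - c * t) :=
    ((hf.comp_add_smul x v).subset hline (convex_Ici a)).sub
      ((convexOn_id (convex_Ici a)).smul hc)
  refine hconc.monotoneOn_of_bddBelow ⟨0, ?_⟩
  rintro _ ⟨t, ht, rfl⟩
  rcases le_or_gt t 0 with ht0 | ht0
  · nlinarith [hf0 _ (hline ht)]
  · have : f (t • v) ≤ f (x + t • v) := hf.monotoneOn_of_nonneg hf0
      (smul_nonneg ht0.le hv) (hline ht) (le_add_of_nonneg_left hx)
    linarith [hcv t ht0]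

end OrderedModule

theorem le_apply_sub_of_le_sub_or_add_le {E : Type*} [AddCommGroup E] [PartialOrder E]
    [IsOrderedAddMonoid E] {nrm : E → ℝ} (hneg : ∀ x, nrm (-x) = nrm x)
    (hmono : ∀ x y, 0 ≤ x → x ≤ y → nrm x ≤ nrm y) {x y w : E} (hw : 0 ≤ w)
    (h : y ≤ x - w ∨ x + w ≤ y) : nrm w ≤ nrm (y - x) := by
  rcases h with h | h
  · rw [← hneg (y - x), neg_sub]
    exact hmono _ _ hw (le_sub_comm.1 h)
  · exact hmono _ _ hw (le_sub_iff_add_le'.2 h)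

section FixedPointIteration

variable {ι : Type*} {T : (ι → ℝ) → ι → ℝ} {xstar v : ι → ℝ} {ρ δ : ℝ}

theorem apply_le_sub_smul (hT : ∀ i, ConcaveOn ℝ (Ici 0) (T · i))
    (hT0 : ∀ x, 0 ≤ x → 0 ≤ T x) (hfix : T xstar = xstar) (hv : 0 ≤ v) (hρ : 0 ≤ ρ)
    (hTv : ∀ t : ℝ, 0 < t → t • ρ • v ≤ T (t • v)) {x : ι → ℝ} (hx : 0 ≤ x) (hδ : 0 ≤ δ)
    (hxδ : x ≤ xstar - δ • v) : T x ≤ xstar - (ρ * δ) • v := by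
  intro i
  have hψ := (hT i).monotoneOn_add_smul_sub_mul (fun y hy => hT0 y hy i) (x := xstar)
    (neg_nonpos.2 hδ) (by simpa [← sub_eq_add_neg] using hx.trans hxδ) hv
    (mul_nonneg hρ (hv i)) (fun t ht => hTv t ht i)
  have hstep := hψ (mem_Ici.2 le_rfl) (mem_Ici.2 (neg_nonpos.2 hδ)) (neg_nonpos.2 hδ)
  simp only [zero_smul, add_zero, mul_zero, sub_zero, hfix, neg_smul, ← sub_eq_add_neg] at hstep
  calc T x i ≤ T (xstar - δ • v) i :=
        (hT i).monotoneOn_of_nonneg (fun y hy => hT0 y hy i) hx (hx.trans hxδ) hxδ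
    _ ≤ (xstar - (ρ * δ) • v) i := by
        simp only [Pi.sub_apply, Pi.smul_apply, smul_eq_mul]
        linarith

theorem add_smul_le_apply (hT : ∀ i, ConcaveOn ℝ (Ici 0) (T · i))
    (hT0 : ∀ x, 0 ≤ x → 0 ≤ T x) (hxstar : 0 ≤ xstar) (hfix : T xstar = xstar) (hv : 0 ≤ v)
    (hρ : 0 ≤ ρ) (hTv : ∀ t : ℝ, 0 < t → t • ρ • v ≤ T (t • v)) {x : ι → ℝ} (hδ : 0 ≤ δ)
    (hxδ : xstar + δ • v ≤ x) : xstar + (ρ * δ) • v ≤ T x := by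
  intro i
  have hψ := (hT i).monotoneOn_add_smul_sub_mul (fun y hy => hT0 y hy i) le_rfl
    (by simpa using hxstar) hv (mul_nonneg hρ (hv i)) (fun t ht => hTv t ht i)
  have hstep := hψ (mem_Ici.2 le_rfl) (mem_Ici.2 hδ) hδ
  simp only [zero_smul, add_zero, mul_zero, sub_zero, hfix] at hstep
  have hxstarδ : 0 ≤ xstar + δ • v := add_nonneg hxstar (smul_nonneg hδ hv)
  calc (xstar + (ρ * δ) • v) i ≤ T (xstar + δ • v) i := by
        simp only [Pi.add_apply, Pi.smul_apply, smul_eq_mul]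
        linarith
    _ ≤ T x i := (hT i).monotoneOn_of_nonneg (fun y hy => hT0 y hy i) hxstarδ
        (hxstarδ.trans hxδ) hxδ

theorem iterate_le_sub_smul_or_add_smul_le (hT : ∀ i, ConcaveOn ℝ (Ici 0) (T · i))
    (hT0 : ∀ x, 0 ≤ x → 0 ≤ T x) (hxstar : 0 ≤ xstar) (hfix : T xstar = xstar) (hv : 0 ≤ v)
    (hρ : 0 ≤ ρ) (hTv : ∀ t : ℝ, 0 < t → t • ρ • v ≤ T (t • v)) {x : ι → ℝ} (hx : 0 ≤ x)
    (hδ : 0 ≤ δ) (h : x ≤ xstar - δ • v ∨ xstar + δ • v ≤ x) (n : ℕ) :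
    T^[n] x ≤ xstar - (ρ ^ n * δ) • v ∨ xstar + (ρ ^ n * δ) • v ≤ T^[n] x := by
  induction n generalizing x δ with
  | zero => simpa using h
  | succ n ih =>
    have hstep : T x ≤ xstar - (ρ * δ) • v ∨ xstar + (ρ * δ) • v ≤ T x :=
      h.imp (apply_le_sub_smul hT hT0 hfix hv hρ hTv hx hδ)
        (add_smul_le_apply hT hT0 hxstar hfix hv hρ hTv hδ)
    rw [Function.iterate_succ_apply, pow_succ, mul_assoc]
    exact ih (hT0 x hx) (mul_nonneg hρ hδ) hstep

end FixedPointIteration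

theorem stmt_13_general (N : ℕ)
    (T : (Fin N → ℝ) → (Fin N → ℝ))
    (hT_pos : ∀ x : Fin N → ℝ, (∀ i, 0 ≤ x i) → ∀ i, 0 < T x i)
    (hT_conc : ∀ i : Fin N, ConcaveOn ℝ {x : Fin N → ℝ | ∀ j, 0 ≤ x j} (fun x => T x i))
    (xstar : Fin N → ℝ) (hxstar : ∀ i, 0 ≤ xstar i)
    (hfix : T xstar = xstar)
    (S : (Fin N → ℝ) → (Fin N → ℝ))
    (hS : ∀ d : Fin N → ℝ, (∀ i, 0 ≤ d i) →
      Tendsto (fun t : ℝ => t⁻¹ • T (t • d)) atTop (𝓝 (S d)))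
    (v : Fin N → ℝ) (hv_nonneg : ∀ i, 0 ≤ v i)
    (ρ : ℝ) (hρ0 : 0 ≤ ρ) (heig : S v = ρ • v)
    (nrm : (Fin N → ℝ) → ℝ)
    (hnrm_smul : ∀ (a : ℝ) (x : Fin N → ℝ), nrm (a • x) = |a| * nrm x)
    (hnrm_mono : ∀ x y : Fin N → ℝ, (0 : Fin N → ℝ) ≤ x → x ≤ y → nrm x ≤ nrm y)
    (x₁ : Fin N → ℝ) (hx₁ : ∀ i, 0 ≤ x₁ i)
    (ε : ℝ) (hε : 0 < ε)
    (hinit : x₁ ≤ xstar - ε • v ∨ xstar + ε • v ≤ x₁) :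
    ∀ n : ℕ, 1 ≤ n → ρ ^ n * ε * nrm v ≤ nrm (T^[n] x₁ - xstar) := by
  intro n _
  have hT0 : ∀ x, 0 ≤ x → 0 ≤ T x := fun x hx i => (hT_pos x hx i).le
  have hTv : ∀ t : ℝ, 0 < t → t • ρ • v ≤ T (t • v) := fun t ht i => by
    have := (hT_conc i).mul_le_of_tendsto (hT0 0 le_rfl i) hv_nonneg
      (tendsto_pi_nhds.1 (hS v hv_nonneg) i) ht
    rwa [heig] at this
  have hδ : 0 ≤ ρ ^ n * ε := by positivity
  have hneg : ∀ x, nrm (-x) = nrm x := fun x => by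
    rw [← neg_one_smul ℝ x, hnrm_smul, abs_neg, abs_one, one_mul]
  calc ρ ^ n * ε * nrm v = nrm ((ρ ^ n * ε) • v) := by rw [hnrm_smul, abs_of_nonneg hδ]
    _ ≤ nrm (T^[n] x₁ - xstar) := le_apply_sub_of_le_sub_or_add_le hneg hnrm_mono
        (smul_nonneg hδ hv_nonneg) (iterate_le_sub_smul_or_add_smul_le hT_conc hT0 hxstar hfix
          hv_nonneg hρ0 hTv hx₁ hε.le hinit n)

/-- Let `T : ℝ₊^N → ℝ₊₊^N` be continuous and concave with fixed point `x*`, let `S` be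
its asymptotic mapping (given via the `Tendsto` hypothesis `S(d) = lim_{t→∞} T(td)/t`),
suppose `S(v) = ρv` with `v ∈ ℝ₊^N \ {0}` and `ρ ∈ [0,1)`, and let `nrm` be a monotone
norm. If `x₁ ∈ ℝ₊^N` satisfies `x₁ ≤ x* − εv` or `x₁ ≥ x* + εv` for some `ε > 0`, then
for every `n ≥ 1`: `ρ^n ε ‖v‖ ≤ ‖T^n(x₁) − x*‖`. -/
theorem stmt_13 (N : ℕ) (hN : 1 ≤ N)
    (T : (Fin N → ℝ) → (Fin N → ℝ))
    (hT_pos : ∀ x : Fin N → ℝ, (∀ i, 0 ≤ x i) → ∀ i, 0 < T x i)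
    (hT_cont : ContinuousOn T {x : Fin N → ℝ | ∀ i, 0 ≤ x i})
    (hT_conc : ∀ i : Fin N, ConcaveOn ℝ {x : Fin N → ℝ | ∀ j, 0 ≤ x j} (fun x => T x i))
    (xstar : Fin N → ℝ) (hxstar : ∀ i, 0 ≤ xstar i)
    (hfix : T xstar = xstar)
    (S : (Fin N → ℝ) → (Fin N → ℝ))
    (hS : ∀ d : Fin N → ℝ, (∀ i, 0 ≤ d i) →
      Tendsto (fun t : ℝ => t⁻¹ • T (t • d)) atTop (𝓝 (S d)))
    (v : Fin N → ℝ) (hv_nonneg : ∀ i, 0 ≤ v i) (hv_ne : v ≠ 0)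
    (ρ : ℝ) (hρ0 : 0 ≤ ρ) (hρ1 : ρ < 1) (heig : S v = ρ • v)
    (nrm : (Fin N → ℝ) → ℝ)
    (hnrm_zero : ∀ x, nrm x = 0 ↔ x = 0)
    (hnrm_smul : ∀ (a : ℝ) (x : Fin N → ℝ), nrm (a • x) = |a| * nrm x)
    (hnrm_add : ∀ x y : Fin N → ℝ, nrm (x + y) ≤ nrm x + nrm y)
    (hnrm_mono : ∀ x y : Fin N → ℝ, (0 : Fin N → ℝ) ≤ x → x ≤ y → nrm x ≤ nrm y)
    (x₁ : Fin N → ℝ) (hx₁ : ∀ i, 0 ≤ x₁ i)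
    (ε : ℝ) (hε : 0 < ε)
    (hinit : x₁ ≤ xstar - ε • v ∨ xstar + ε • v ≤ x₁) :
    ∀ n : ℕ, 1 ≤ n → ρ ^ n * ε * nrm v ≤ nrm (T^[n] x₁ - xstar) :=
  stmt_13_general N T hT_pos hT_conc xstar hxstar hfix S hS v hv_nonneg ρ hρ0 heig nrm hnrm_smul
    hnrm_mono x₁ hx₁ ε hε hinit
end
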